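/- arXiv:2401.00347 — 3 statements merged into one kernel-verified Lean document; each statement's English description precedes it below -/
import Mathlib

section
/- For a connected graph G on n vertices, the average betweenness centrality B(G) satisfies B(G) ≥ |E(Ḡ)|/n, where Ḡ is the complement of G, with equality if and only if G has diameter at most 2. -/
open SimpleGraph Finset BigOperators

namespace BUG

variable {V : Type*}

/-- Number of shortest `v`–`w` paths (walks of length `dist v w`). -/
noncomputable def sigma (G : SimpleGraph V) (v w : V) : ℕ :=
  Nat.card {p : G.Walk v w // p.length = G.dist v w}

/-- Number of shortest `v`–`w` paths containing `x` as an internal vertex. -/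
noncomputable def sigmaVia (G : SimpleGraph V) (v w x : V) : ℕ :=
  Nat.card {p : G.Walk v w // p.length = G.dist v w ∧ x ∈ p.support ∧ x ≠ v ∧ x ≠ w}

/-- Betweenness centrality of a vertex. -/
noncomputable def btw [Fintype V] [DecidableEq V] (G : SimpleGraph V) (x : V) : ℝ :=
  (1/2) * ∑ v : V, ∑ w : V,
    if v ≠ w then (sigmaVia G v w x : ℝ) / (sigma G v w : ℝ) else 0

/-- Average betweenness centrality of a graph. -/
noncomputable def avgBtw [Fintype V] [DecidableEq V] (G : SimpleGraph V) : ℝ :=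
  (∑ x : V, btw G x) / (Fintype.card V)

/-- A graph is betweenness-uniform (a BUG) if all vertices have equal betweenness. -/
def IsBUG [Fintype V] [DecidableEq V] (G : SimpleGraph V) : Prop :=
  ∀ x y : V, btw G x = btw G y

/-- Vertices close to the edge `e`: its endpoints and their neighbours. -/
def closeSet (H : SimpleGraph V) (e : Sym2 V) : Set V :=
  {v | ∃ u ∈ e, v = u ∨ H.Adj v u}

/-- Edges close to the vertex `x`. -/
def closeEdges (H : SimpleGraph V) (x : V) : Set (Sym2 V) :=
  {e ∈ H.edgeSet | x ∈ closeSet H e}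

/-- Weight of an edge: `1/(n - |closeSet e|)`. -/
noncomputable def weight [Fintype V] (H : SimpleGraph V) (e : Sym2 V) : ℝ :=
  1 / ((Fintype.card V : ℝ) - (closeSet H e).ncard)

open Classical in
/-- Co-betweenness of a vertex: total weight of the edges close to it. -/
noncomputable def coB [Fintype V] [DecidableEq V] (H : SimpleGraph V) (x : V) : ℝ :=
  ∑ e : Sym2 V, if e ∈ closeEdges H x then weight H e else 0

open Classical in
/-- Total weight of all edges of `H`. -/
noncomputable def totalWeight [Fintype V] [DecidableEq V] (H : SimpleGraph V) : ℝ :=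
  ∑ e : Sym2 V, if e ∈ H.edgeSet then weight H e else 0

/-- `C` is (the vertex set of) a connected component of `B`. -/
def IsComponent (B : SimpleGraph V) (C : Set V) : Prop :=
  C.Nonempty ∧ (∀ u ∈ C, ∀ v, B.Adj u v → v ∈ C) ∧ (B.induce C).Connected

/-- The star `K_{1,ℓ}` with center `0`. -/
def starG (ℓ : ℕ) : SimpleGraph (Fin (ℓ+1)) :=
  SimpleGraph.fromRel (fun i _ => i = 0)

/-- Disjoint union of two graphs. -/
def sumGraph {α β : Type*} (G : SimpleGraph α) (H : SimpleGraph β) :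
    SimpleGraph (α ⊕ β) where
  Adj x y := Sum.LiftRel G.Adj H.Adj x y
  symm := ⟨by rintro (a|a) (b|b) h <;> cases h <;> constructor <;> apply SimpleGraph.adj_symm <;>
    assumption⟩
  loopless := ⟨by rintro (a|a) h <;> cases h <;> exact SimpleGraph.irrefl _ ‹_›⟩

/-- Disjoint union of `k` copies of a graph `H`. -/
def copies {β : Type*} (k : ℕ) (H : SimpleGraph β) : SimpleGraph (Fin k × β) where
  Adj p q := p.1 = q.1 ∧ H.Adj p.2 q.2
  symm := ⟨by rintro ⟨a,i⟩ ⟨b,j⟩ ⟨h1,h2⟩; exact ⟨h1.symm, h2.symm⟩⟩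
  loopless := ⟨by rintro ⟨a,i⟩ ⟨-,h⟩; exact SimpleGraph.irrefl _ h⟩



section Aux

variable [Fintype V] [DecidableEq V]

lemma sigma_eq_card (G : SimpleGraph V) [DecidableRel G.Adj] (v w : V) :
    sigma G v w = (G.finsetWalkLength (G.dist v w) v w).card := by
  rw [sigma, ← Nat.card_eq_finsetCard]
  exact Nat.card_congr (Equiv.subtypeEquivRight fun p =>
    (SimpleGraph.mem_finsetWalkLength_iff).symm)

lemma sigma_pos (G : SimpleGraph V) (hG : G.Connected) (v w : V) : 0 < sigma G v w := by
  classical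
  rw [sigma_eq_card, Finset.card_pos]
  obtain ⟨p, hp⟩ := hG.exists_walk_length_eq_dist v w
  exact ⟨p, SimpleGraph.mem_finsetWalkLength_iff.mpr hp⟩

lemma sum_sigmaVia (G : SimpleGraph V) (v w : V) (hvw : v ≠ w) :
    ∑ x : V, sigmaVia G v w x = sigma G v w * (G.dist v w - 1) := by
  classical
  set d := G.dist v w with hd
  set S := G.finsetWalkLength d v w with hS
  have hvia : ∀ x : V, sigmaVia G v w x
      = (S.filter (fun p => x ∈ p.support ∧ x ≠ v ∧ x ≠ w)).card := by
    intro x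
    rw [sigmaVia, ← Nat.card_eq_finsetCard]
    exact Nat.card_congr (Equiv.subtypeEquivRight fun p => by
      simp [hS, SimpleGraph.mem_finsetWalkLength_iff, and_assoc]; intros; exact Iff.rfl)
  calc ∑ x : V, sigmaVia G v w x
      = ∑ x : V, ∑ p ∈ S, (if x ∈ p.support ∧ x ≠ v ∧ x ≠ w then 1 else 0) := by
        refine Finset.sum_congr rfl fun x _ => ?_
        rw [hvia, Finset.card_filter]
    _ = ∑ p ∈ S, ∑ x : V, (if x ∈ p.support ∧ x ≠ v ∧ x ≠ w then 1 else 0) :=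
        Finset.sum_comm
    _ = ∑ _p ∈ S, (d - 1) := by
        refine Finset.sum_congr rfl fun p hp => ?_
        have hp' : p.length = d := SimpleGraph.mem_finsetWalkLength_iff.mp hp
        have hpath : p.IsPath := p.isPath_of_length_eq_dist hp'
        have hnd : p.support.Nodup := hpath.support_nodup
        rw [← Finset.card_filter]
        have hset : (Finset.univ.filter (fun x => x ∈ p.support ∧ x ≠ v ∧ x ≠ w))
            = (p.support.toFinset.erase v).erase w := by
          ext x
          simp only [Finset.mem_filter, Finset.mem_univ, true_and, Finset.mem_erase,
            List.mem_toFinset]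
          tauto
        rw [hset]
        have hv : v ∈ p.support.toFinset := List.mem_toFinset.mpr p.start_mem_support
        have hw : w ∈ p.support.toFinset.erase v :=
          Finset.mem_erase.mpr ⟨fun h => hvw h.symm, List.mem_toFinset.mpr p.end_mem_support⟩
        rw [Finset.card_erase_of_mem hw,
          Finset.card_erase_of_mem hv, List.toFinset_card_of_nodup hnd,
          SimpleGraph.Walk.length_support, hp']
        omega
    _ = S.card * (d - 1) := by rw [Finset.sum_const, smul_eq_mul]
    _ = sigma G v w * (d - 1) := by rw [sigma_eq_card]

lemma sum_btw (G : SimpleGraph V) (hG : G.Connected) :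
    ∑ x : V, btw G x
      = ((∑ v : V, ∑ w : V, (if v ≠ w then G.dist v w - 1 else 0) : ℕ) : ℝ) / 2 := by
  classical
  have key : ∀ v w : V,
      (∑ x : V, if v ≠ w then (sigmaVia G v w x : ℝ) / (sigma G v w : ℝ) else 0)
        = ((if v ≠ w then G.dist v w - 1 else 0 : ℕ) : ℝ) := by
    intro v w
    by_cases hvw : v ≠ w
    · simp only [if_pos hvw]
      rw [← Finset.sum_div, ← Nat.cast_sum, sum_sigmaVia G v w hvw]
      have hs : (sigma G v w : ℝ) ≠ 0 := by
        exact_mod_cast (sigma_pos G hG v w).ne'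
      push_cast
      rw [mul_comm, mul_div_assoc, div_self hs, mul_one]
    · simp [hvw]
  calc ∑ x : V, btw G x
      = (1/2) * ∑ x : V, ∑ v : V, ∑ w : V,
          (if v ≠ w then (sigmaVia G v w x : ℝ) / (sigma G v w : ℝ) else 0) := by
        rw [Finset.mul_sum]
        rfl
    _ = (1/2) * ∑ v : V, ∑ w : V, ∑ x : V,
          (if v ≠ w then (sigmaVia G v w x : ℝ) / (sigma G v w : ℝ) else 0) := by
        rw [Finset.sum_comm]
        congr 1
        exact Finset.sum_congr rfl fun v _ => Finset.sum_comm
    _ = (1/2) * ∑ v : V, ∑ w : V, ((if v ≠ w then G.dist v w - 1 else 0 : ℕ) : ℝ) := by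
        congr 1
        exact Finset.sum_congr rfl fun v _ => Finset.sum_congr rfl fun w _ => key v w
    _ = ((∑ v : V, ∑ w : V, (if v ≠ w then G.dist v w - 1 else 0) : ℕ) : ℝ) / 2 := by
        push_cast
        ring

lemma two_mul_card_edges (H : SimpleGraph V) [DecidableRel H.Adj] :
    2 * Nat.card H.edgeSet = ∑ v : V, ∑ w : V, (if H.Adj v w then 1 else 0) := by
  classical
  have h1 : Nat.card H.edgeSet = H.edgeFinset.card := by
    rw [Nat.card_eq_fintype_card, SimpleGraph.edgeFinset_card]
  have h2 : ∀ v : V, H.degree v = ∑ w : V, (if H.Adj v w then 1 else 0) := by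
    intro v
    rw [← SimpleGraph.card_neighborFinset_eq_degree, SimpleGraph.neighborFinset_eq_filter,
      Finset.card_filter]
  rw [h1, ← SimpleGraph.sum_degrees_eq_twice_card_edges]
  exact Finset.sum_congr rfl fun v _ => h2 v

end Aux

/-- For a connected graph `G` on `n` vertices, `B(G) ≥ |E(Ḡ)|/n`,
with equality iff `G` has diameter at most 2. -/

theorem stmt0 {V : Type*} [Fintype V] [DecidableEq V] (G : SimpleGraph V)
    (hG : G.Connected) :
    avgBtw G ≥ (Nat.card Gᶜ.edgeSet : ℝ) / (Fintype.card V : ℝ) ∧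
    (avgBtw G = (Nat.card Gᶜ.edgeSet : ℝ) / (Fintype.card V : ℝ) ↔ G.diam ≤ 2) := by
  classical
  haveI : Nonempty V := hG.nonempty
  have hnpos : (0:ℝ) < (Fintype.card V : ℝ) := by exact_mod_cast Fintype.card_pos
  have hge : ∀ v w : V,
      (if Gᶜ.Adj v w then (1:ℕ) else 0) ≤ (if v ≠ w then G.dist v w - 1 else 0) := by
    intro v w
    by_cases h : v = w
    · have hc : ¬ Gᶜ.Adj v w := fun hc => hc.ne h
      rw [if_neg hc]
      exact Nat.zero_le _
    · rw [if_pos h]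
      by_cases hA : G.Adj v w
      · have hc : ¬ Gᶜ.Adj v w := fun hc => ((G.compl_adj v w).mp hc).2 hA
        rw [if_neg hc]
        exact Nat.zero_le _
      · have hc : Gᶜ.Adj v w := (G.compl_adj v w).mpr ⟨h, hA⟩
        have h1 : 0 < G.dist v w := hG.pos_dist_of_ne h
        have h2 : G.dist v w ≠ 1 := fun hd => hA (SimpleGraph.dist_eq_one_iff_adj.mp hd)
        rw [if_pos hc]
        omega
  have heq : (∀ v w : V, (if v ≠ w then G.dist v w - 1 else 0)
        = (if Gᶜ.Adj v w then (1:ℕ) else 0))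
      ↔ (∀ v w : V, v ≠ w → G.dist v w ≤ 2) := by
    constructor
    · intro h v w hvw
      have := h v w
      rw [if_pos hvw] at this
      by_cases hA : G.Adj v w
      · exact le_trans (le_of_eq (SimpleGraph.dist_eq_one_iff_adj.mpr hA)) one_le_two
      · have hc : Gᶜ.Adj v w := (G.compl_adj v w).mpr ⟨hvw, hA⟩
        rw [if_pos hc] at this
        omega
    · intro h v w
      by_cases hvw : v = w
      · have hc : ¬ Gᶜ.Adj v w := fun hc => hc.ne hvw
        rw [if_neg hc, if_neg (fun h' : v ≠ w => h' hvw)]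
      · rw [if_pos hvw]
        by_cases hA : G.Adj v w
        · have hc : ¬ Gᶜ.Adj v w := fun hc => ((G.compl_adj v w).mp hc).2 hA
          rw [if_neg hc, SimpleGraph.dist_eq_one_iff_adj.mpr hA]
        · have hc : Gᶜ.Adj v w := (G.compl_adj v w).mpr ⟨hvw, hA⟩
          have h1 : 0 < G.dist v w := hG.pos_dist_of_ne hvw
          have h2 : G.dist v w ≠ 1 := fun hd => hA (SimpleGraph.dist_eq_one_iff_adj.mp hd)
          have h3 := h v w hvw
          rw [if_pos hc]
          omega
  have hdiam : (∀ v w : V, v ≠ w → G.dist v w ≤ 2) ↔ G.diam ≤ 2 := by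
    obtain ⟨u, v, huv⟩ := SimpleGraph.exists_edist_eq_ediam_of_finite (G := G)
    have hdu : G.diam = G.dist u v := by
      rw [SimpleGraph.diam, ← huv]; rfl
    constructor
    · intro h
      rw [hdu]
      by_cases hu : u = v
      · subst hu; simp [SimpleGraph.dist_self]
      · exact h u v hu
    · intro h v' w' _
      refine le_trans (SimpleGraph.dist_le_diam ?_) h
      rw [← huv]
      exact SimpleGraph.edist_ne_top_iff_reachable.mpr (hG u v)
  have hFG : (∑ v : V, ∑ w : V, (if Gᶜ.Adj v w then (1:ℕ) else 0))
      ≤ ∑ v : V, ∑ w : V, (if v ≠ w then G.dist v w - 1 else 0) :=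
    Finset.sum_le_sum fun v _ => Finset.sum_le_sum fun w _ => hge v w
  have hFGiff : (∑ v : V, ∑ w : V, (if v ≠ w then G.dist v w - 1 else 0))
        = (∑ v : V, ∑ w : V, (if Gᶜ.Adj v w then (1:ℕ) else 0))
      ↔ ∀ v w : V, (if v ≠ w then G.dist v w - 1 else 0)
        = (if Gᶜ.Adj v w then (1:ℕ) else 0) := by
    rw [← Finset.sum_product', ← Finset.sum_product', eq_comm,
      Finset.sum_eq_sum_iff_of_le (fun p _ => hge p.1 p.2)]
    constructor
    · intro h v w
      exact (h (v, w) (Finset.mem_univ _)).symm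
    · intro h p _
      exact (h p.1 p.2).symm
  have havg : avgBtw G
      = ((∑ v : V, ∑ w : V, (if v ≠ w then G.dist v w - 1 else 0) : ℕ) : ℝ)
        / (2 * (Fintype.card V : ℝ)) := by
    rw [avgBtw, sum_btw G hG, div_div]
  have h2 : ((∑ v : V, ∑ w : V, (if Gᶜ.Adj v w then (1:ℕ) else 0) : ℕ) : ℝ)
      = 2 * (Nat.card Gᶜ.edgeSet : ℝ) := by
    exact_mod_cast (two_mul_card_edges Gᶜ).symm
  have hrhs : (Nat.card Gᶜ.edgeSet : ℝ) / (Fintype.card V : ℝ)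
      = ((∑ v : V, ∑ w : V, (if Gᶜ.Adj v w then (1:ℕ) else 0) : ℕ) : ℝ)
        / (2 * (Fintype.card V : ℝ)) := by
    rw [h2, mul_div_mul_left _ _ (two_ne_zero (α := ℝ))]
  have h2n : (0:ℝ) < 2 * (Fintype.card V : ℝ) := by linarith
  constructor
  · rw [ge_iff_le, havg, hrhs]
    gcongr
  · rw [havg, hrhs, div_eq_div_iff h2n.ne' h2n.ne']
    constructor
    · intro h
      have hcast := mul_right_cancel₀ h2n.ne' h
      have hFGe : (∑ v : V, ∑ w : V, (if v ≠ w then G.dist v w - 1 else 0))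
          = (∑ v : V, ∑ w : V, (if Gᶜ.Adj v w then (1:ℕ) else 0)) := by
        exact_mod_cast hcast
      exact hdiam.mp (heq.mp (hFGiff.mp hFGe))
    · intro h
      have hFGe := hFGiff.mpr (heq.mpr (hdiam.mpr h))
      rw [hFGe]

end BUG
end

section
/- If G is a graph on n vertices whose complement Ḡ is disconnected and every connected component of Ḡ is a cycle of length at least 4, then G is betweenness-uniform with betweenness value 1. -/
open SimpleGraph Finset BigOperators

namespace BUG

variable {V : Type*}

section Aux

/-! ### Auxiliary lemmas -/

lemma aux_walk_len1 {G : SimpleGraph V} {v w : V} (p : G.Walk v w) (h : p.length = 1) :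
    ∃ (h1 : G.Adj v w), p = SimpleGraph.Walk.cons h1 SimpleGraph.Walk.nil := by
  cases p with
  | nil => simp at h
  | cons h1 q =>
    cases q with
    | nil => exact ⟨h1, rfl⟩
    | cons h2 r => simp [SimpleGraph.Walk.length_cons] at h

lemma aux_walk_len2 {G : SimpleGraph V} {v w : V} (p : G.Walk v w) (h : p.length = 2) :
    ∃ (u : V) (h1 : G.Adj v u) (h2 : G.Adj u w),
      p = SimpleGraph.Walk.cons h1 (SimpleGraph.Walk.cons h2 SimpleGraph.Walk.nil) := by
  cases p with
  | nil => simp at h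
  | cons h1 q =>
    cases q with
    | nil => simp at h
    | cons h2 r =>
      cases r with
      | nil => exact ⟨_, h1, h2, rfl⟩
      | cons h3 s => simp [SimpleGraph.Walk.length_cons] at h

lemma aux_sigma_adj {G : SimpleGraph V} {v w : V} (h : G.Adj v w) : sigma G v w = 1 := by
  have hd : G.dist v w = 1 := SimpleGraph.dist_eq_one_iff_adj.mpr h
  rw [sigma, hd]
  rw [Nat.card_eq_one_iff_unique]
  constructor
  · constructor
    rintro ⟨p, hp⟩ ⟨q, hq⟩
    obtain ⟨h1, rfl⟩ := aux_walk_len1 p hp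
    obtain ⟨h2, rfl⟩ := aux_walk_len1 q hq
    rfl
  · exact ⟨⟨SimpleGraph.Walk.cons h SimpleGraph.Walk.nil, by simp⟩⟩

lemma aux_sigmaVia_adj {G : SimpleGraph V} {v w x : V} (h : G.Adj v w) :
    sigmaVia G v w x = 0 := by
  have hd : G.dist v w = 1 := SimpleGraph.dist_eq_one_iff_adj.mpr h
  rw [sigmaVia, hd]
  rw [Nat.card_eq_zero]
  left
  constructor
  rintro ⟨p, hp, hx, hxv, hxw⟩
  obtain ⟨h1, rfl⟩ := aux_walk_len1 p hp
  simp [SimpleGraph.Walk.support_cons] at hx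
  rcases hx with rfl | rfl
  · exact hxv rfl
  · exact hxw rfl

lemma aux_sigma_dist2 [Fintype V] {G : SimpleGraph V} {v w : V} (hd : G.dist v w = 2) :
    sigma G v w = Nat.card {u : V // G.Adj v u ∧ G.Adj u w} := by
  rw [sigma, hd]
  refine (Nat.card_eq_of_bijective
    (fun (q : {u : V // G.Adj v u ∧ G.Adj u w}) =>
      (⟨SimpleGraph.Walk.cons q.2.1 (SimpleGraph.Walk.cons q.2.2 SimpleGraph.Walk.nil),
      by simp⟩ : {p : G.Walk v w // p.length = 2})) ⟨?_, ?_⟩).symm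
  · rintro ⟨u, hu⟩ ⟨u', hu'⟩ hq
    have := congrArg (fun r => (r : {p : G.Walk v w // p.length = 2}).1.getVert 1) hq
    simpa using this
  · rintro ⟨p, hp⟩
    obtain ⟨u, h1, h2, rfl⟩ := aux_walk_len2 p hp
    exact ⟨⟨u, h1, h2⟩, rfl⟩

open Classical in
lemma aux_sigmaVia_dist2 [Fintype V] {G : SimpleGraph V} {v w x : V} (hd : G.dist v w = 2) :
    sigmaVia G v w x = if G.Adj v x ∧ G.Adj x w then 1 else 0 := by
  rw [sigmaVia, hd]
  split_ifs with hx
  · rw [Nat.card_eq_one_iff_unique]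
    constructor
    · constructor
      rintro ⟨p, hp, hxs, hxv, hxw⟩ ⟨q, hq, hxs', hxv', hxw'⟩
      obtain ⟨u, h1, h2, rfl⟩ := aux_walk_len2 p hp
      obtain ⟨u', h1', h2', rfl⟩ := aux_walk_len2 q hq
      simp only [SimpleGraph.Walk.support_cons, SimpleGraph.Walk.support_nil,
        List.mem_cons, List.mem_singleton] at hxs hxs'
      have hu : u = x := by
        rcases hxs with rfl | rfl | rfl | h
        · exact absurd rfl hxv
        · rfl
        · exact absurd rfl hxw
        · simp at h
      have hu' : u' = x := by
        rcases hxs' with rfl | rfl | rfl | h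
        · exact absurd rfl hxv'
        · rfl
        · exact absurd rfl hxw'
        · simp at h
      subst hu; subst hu'
      rfl
    · refine ⟨⟨SimpleGraph.Walk.cons hx.1 (SimpleGraph.Walk.cons hx.2 SimpleGraph.Walk.nil),
        by simp, by simp, ?_, ?_⟩⟩
      · exact (G.ne_of_adj hx.1).symm
      · exact G.ne_of_adj hx.2
  · rw [Nat.card_eq_zero]
    left
    constructor
    rintro ⟨p, hp, hxs, hxv, hxw⟩
    obtain ⟨u, h1, h2, rfl⟩ := aux_walk_len2 p hp
    simp only [SimpleGraph.Walk.support_cons, SimpleGraph.Walk.support_nil,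
      List.mem_cons, List.mem_singleton] at hxs
    rcases hxs with rfl | rfl | rfl | h
    · exact hxv rfl
    · exact hx ⟨h1, h2⟩
    · exact hxw rfl
    · simp at h

/-! ### Fin / cycle graph lemmas -/

open scoped Fin.NatCast Fin.CommRing

lemma aux_fin_val_ofNat {m k : ℕ} (h : k < m+4) : ((k : Fin (m+4)) : ℕ) = k := by
  rw [Fin.val_natCast]; exact Nat.mod_eq_of_lt h

lemma aux_fin_two_ne_zero {m : ℕ} : (2 : Fin (m+4)) ≠ 0 := by
  intro h
  have h2 : ((2 : ℕ) : Fin (m+4)) = (2 : Fin (m+4)) := by push_cast; ring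
  have := aux_fin_val_ofNat (m := m) (k := 2) (by omega)
  rw [h2, h] at this
  simp at this

lemma aux_fin_three_ne_zero {m : ℕ} : (3 : Fin (m+4)) ≠ 0 := by
  intro h
  have h2 : ((3 : ℕ) : Fin (m+4)) = (3 : Fin (m+4)) := by push_cast; ring
  have := aux_fin_val_ofNat (m := m) (k := 3) (by omega)
  rw [h2, h] at this
  simp at this

lemma aux_fin_one_ne_zero {m : ℕ} : (1 : Fin (m+4)) ≠ 0 := by
  intro h
  have := congrArg Fin.val h
  simp [Fin.val_one] at this

lemma aux_cyc_adj_iff {m : ℕ} (y c : Fin (m+4)) :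
    (cycleGraph (m+4)).Adj y c ↔ c = y - 1 ∨ c = y + 1 := by
  rw [show ((cycleGraph (m+4)).Adj y c) = ((cycleGraph (m+2+2)).Adj y c) from rfl,
    cycleGraph_adj (n := m+2)]
  constructor
  · rintro (h | h)
    · left
      rw [sub_eq_iff_eq_add] at h
      rw [h]; ring
    · right
      rw [sub_eq_iff_eq_add] at h
      rw [h]; ring
  · rintro (rfl | rfl)
    · left; exact sub_sub_cancel y 1
    · right; exact add_sub_cancel_left y 1

lemma aux_cyc_sub_ne_add {m : ℕ} (y : Fin (m+4)) : y - 1 ≠ y + 1 := by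
  intro h
  have h1 : y = y + (1 + 1) := by
    have := sub_eq_iff_eq_add.mp h
    linear_combination this
  have h2 : (1 + 1 : Fin (m+4)) = 0 := left_eq_add.mp h1
  rw [one_add_one_eq_two] at h2
  exact aux_fin_two_ne_zero h2

lemma aux_cyc_no_triangle {m : ℕ} {a b c : Fin (m+4)} (hab : (cycleGraph (m+4)).Adj a b)
    (hbc : (cycleGraph (m+4)).Adj b c) (hac : (cycleGraph (m+4)).Adj a c) : False := by
  rw [aux_cyc_adj_iff] at hab hbc hac
  rcases hab with rfl | rfl <;> rcases hbc with h2 | h2 <;> rcases hac with h3 | h3 <;>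
    rw [h2] at h3 <;>
    first
      | exact aux_fin_one_ne_zero (by linear_combination h3)
      | exact aux_fin_one_ne_zero (by linear_combination -h3)
      | exact aux_fin_three_ne_zero (by linear_combination h3)
      | exact aux_fin_three_ne_zero (by linear_combination -h3)

/-! ### Connected components -/

lemma aux_reachable_induce {B : SimpleGraph V} {C : Set V}
    (hcl : ∀ u ∈ C, ∀ v, B.Adj u v → v ∈ C) {u v : V} (p : B.Walk u v) :
    ∀ (hu : u ∈ C) (hv : v ∈ C), (B.induce C).Reachable ⟨u, hu⟩ ⟨v, hv⟩ := by
  induction p with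
  | nil => intro hu hv; rfl
  | @cons u b v h q ih =>
    intro hu hv
    have hb : b ∈ C := hcl u hu b h
    have hadj : (B.induce C).Adj ⟨u, hu⟩ ⟨b, hb⟩ := h
    exact hadj.reachable.trans (ih hb hv)

lemma aux_comp_isComponent (B : SimpleGraph V) (x : V) :
    IsComponent B (B.connectedComponentMk x).supp := by
  have hcl : ∀ u ∈ (B.connectedComponentMk x).supp, ∀ v, B.Adj u v →
      v ∈ (B.connectedComponentMk x).supp := by
    intro u hu v huv
    rw [SimpleGraph.ConnectedComponent.mem_supp_iff] at hu ⊢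
    rw [← hu]
    exact (SimpleGraph.ConnectedComponent.connectedComponentMk_eq_of_adj huv).symm
  refine ⟨⟨x, rfl⟩, hcl, ?_⟩
  have hne : Nonempty ((B.connectedComponentMk x).supp) := ⟨⟨x, rfl⟩⟩
  rw [SimpleGraph.connected_iff]
  refine ⟨?_, hne⟩
  rintro ⟨u, hu⟩ ⟨v, hv⟩
  have hr : B.Reachable u v := by
    rw [SimpleGraph.ConnectedComponent.mem_supp_iff] at hu hv
    exact SimpleGraph.ConnectedComponent.exact (hu.trans hv.symm)
  exact hr.elim fun p => aux_reachable_induce hcl p hu hv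

/-! ### Structure of the complement -/

lemma aux_deg_two {B : SimpleGraph V}
    (hcyc : ∀ C : Set V, IsComponent B C → ∃ k, 4 ≤ k ∧ Nonempty ((B.induce C) ≃g cycleGraph k))
    (x : V) :
    ∃ a b : V, a ≠ b ∧ B.Adj x a ∧ B.Adj x b ∧ ∀ c, B.Adj x c → c = a ∨ c = b := by
  set C := (B.connectedComponentMk x).supp with hC
  obtain ⟨k, hk4, ⟨φ⟩⟩ := hcyc C (aux_comp_isComponent B x)
  obtain ⟨m, rfl⟩ : ∃ m, k = m + 4 := ⟨k - 4, by omega⟩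
  have hx : x ∈ C := by rw [hC, SimpleGraph.ConnectedComponent.mem_supp_iff]
  set y := φ ⟨x, hx⟩ with hy
  have key : ∀ z : Fin (m+4), (cycleGraph (m+4)).Adj y z → B.Adj x ((φ.symm z) : V) := by
    intro z hz
    have h1 : (B.induce C).Adj (φ.symm y) (φ.symm z) := by
      rw [← φ.map_adj_iff]
      simpa using hz
    rw [hy, φ.symm_apply_apply] at h1
    exact h1
  refine ⟨((φ.symm (y - 1)) : V), ((φ.symm (y + 1)) : V), ?_, ?_, ?_, ?_⟩
  · intro h
    have := φ.symm.injective (Subtype.coe_injective h)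
    exact aux_cyc_sub_ne_add y this
  · exact key _ ((aux_cyc_adj_iff y (y-1)).mpr (Or.inl rfl))
  · exact key _ ((aux_cyc_adj_iff y (y+1)).mpr (Or.inr rfl))
  · intro c hc
    have hcC : c ∈ C := (aux_comp_isComponent B x).2.1 x hx c hc
    have h1 : (B.induce C).Adj ⟨x, hx⟩ ⟨c, hcC⟩ := hc
    have h2 : (cycleGraph (m+4)).Adj y (φ ⟨c, hcC⟩) := φ.map_adj_iff.mpr h1
    rcases (aux_cyc_adj_iff _ _).mp h2 with h3 | h3
    · left
      have : (⟨c, hcC⟩ : C) = φ.symm (y - 1) := by rw [← h3, φ.symm_apply_apply]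
      exact congrArg Subtype.val this
    · right
      have : (⟨c, hcC⟩ : C) = φ.symm (y + 1) := by rw [← h3, φ.symm_apply_apply]
      exact congrArg Subtype.val this

lemma aux_tri_free {B : SimpleGraph V}
    (hcyc : ∀ C : Set V, IsComponent B C → ∃ k, 4 ≤ k ∧ Nonempty ((B.induce C) ≃g cycleGraph k))
    (p q r : V) (hpq : B.Adj p q) (hqr : B.Adj q r) (hpr : B.Adj p r) : False := by
  set C := (B.connectedComponentMk p).supp with hC
  obtain ⟨k, hk4, ⟨φ⟩⟩ := hcyc C (aux_comp_isComponent B p)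
  obtain ⟨m, rfl⟩ : ∃ m, k = m + 4 := ⟨k - 4, by omega⟩
  have hp : p ∈ C := by rw [hC, SimpleGraph.ConnectedComponent.mem_supp_iff]
  have hq : q ∈ C := (aux_comp_isComponent B p).2.1 p hp q hpq
  have hr : r ∈ C := (aux_comp_isComponent B p).2.1 p hp r hpr
  have h1 : (B.induce C).Adj ⟨p, hp⟩ ⟨q, hq⟩ := hpq
  have h2 : (B.induce C).Adj ⟨q, hq⟩ ⟨r, hr⟩ := hqr
  have h3 : (B.induce C).Adj ⟨p, hp⟩ ⟨r, hr⟩ := hpr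
  exact aux_cyc_no_triangle (φ.map_adj_iff.mpr h1) (φ.map_adj_iff.mpr h2) (φ.map_adj_iff.mpr h3)

/-! ### Complement adjacency -/

lemma aux_adj_compl_iff (G : SimpleGraph V) (v u : V) :
    G.Adj v u ↔ u ≠ v ∧ ¬Gᶜ.Adj v u := by
  rw [SimpleGraph.compl_adj]
  constructor
  · intro h
    exact ⟨(G.ne_of_adj h).symm, fun hc => hc.2 h⟩
  · rintro ⟨h1, h2⟩
    push_neg at h2
    exact h2 (fun e => h1 e.symm)

lemma aux_other_nbr {B : SimpleGraph V}
    (hdeg : ∀ x, ∃ a b, a ≠ b ∧ B.Adj x a ∧ B.Adj x b ∧ ∀ c, B.Adj x c → c = a ∨ c = b)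
    {u v : V} (h : B.Adj u v) :
    ∃ t, B.Adj u t ∧ t ≠ v ∧ ∀ c, B.Adj u c → c = v ∨ c = t := by
  obtain ⟨a, b, hab, ha, hb, htot⟩ := hdeg u
  rcases htot v h with rfl | rfl
  · exact ⟨b, hb, fun e => hab e.symm, fun c hc => htot c hc⟩
  · exact ⟨a, ha, hab, fun c hc => (htot c hc).symm⟩

open Classical in
lemma aux_pair_facts [Fintype V] {G : SimpleGraph V}
    (hdeg : ∀ x, ∃ a b, a ≠ b ∧ Gᶜ.Adj x a ∧ Gᶜ.Adj x b ∧ ∀ c, Gᶜ.Adj x c → c = a ∨ c = b)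
    (htri : ∀ p q r : V, Gᶜ.Adj p q → Gᶜ.Adj q r → Gᶜ.Adj p r → False)
    (hfar : ∀ v : V, ∃ u, ¬Gᶜ.Reachable v u)
    {v w : V} (h : Gᶜ.Adj v w) :
    G.dist v w = 2 ∧ sigma G v w = Fintype.card V - 4 ∧ 4 < Fintype.card V := by
  obtain ⟨a, ha, haw, hatot⟩ := aux_other_nbr hdeg h
  obtain ⟨b, hb, hbv, hbtot⟩ := aux_other_nbr hdeg h.symm
  have hvw : v ≠ w := h.ne
  have hva : v ≠ a := fun e => Gᶜ.irrefl (e ▸ ha)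
  have hwb : w ≠ b := fun e => Gᶜ.irrefl (e ▸ hb)
  have hvb : v ≠ b := fun e => hbv e.symm
  have hwa : w ≠ a := fun e => haw e.symm
  have hab : a ≠ b := by
    rintro rfl
    exact htri v w a h hb ha
  have hfil : (univ.filter fun u => G.Adj v u ∧ G.Adj u w) =
      univ \ {v, w, a, b} := by
    ext u
    simp only [mem_filter, mem_univ, true_and, mem_sdiff, mem_insert, mem_singleton]
    rw [G.adj_comm u w, aux_adj_compl_iff G v u, aux_adj_compl_iff G w u]
    constructor
    · rintro ⟨⟨huv, hnv⟩, ⟨huw, hnw⟩⟩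
      push_neg
      refine ⟨huv, huw, ?_, ?_⟩
      · rintro rfl; exact hnv ha
      · rintro rfl; exact hnw hb
    · intro hu
      push_neg at hu
      obtain ⟨huv, huw, hua, hub⟩ := hu
      refine ⟨⟨huv, fun hc => ?_⟩, ⟨huw, fun hc => ?_⟩⟩
      · rcases hatot u hc with rfl | rfl
        · exact huw rfl
        · exact hua rfl
      · rcases hbtot u hc with rfl | rfl
        · exact huv rfl
        · exact hub rfl
  have hcard4 : ({v, w, a, b} : Finset V).card = 4 := by
    rw [Finset.card_insert_of_notMem (by simp [hvw, hva, hvb]),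
      Finset.card_insert_of_notMem (by simp [hwa, hwb]),
      Finset.card_insert_of_notMem (by simp [hab]), Finset.card_singleton]
  have hcardfil : (univ.filter fun u => G.Adj v u ∧ G.Adj u w).card = Fintype.card V - 4 := by
    rw [hfil, Finset.card_sdiff_of_subset (Finset.subset_univ _), hcard4, Finset.card_univ]
  obtain ⟨u, hu⟩ := hfar v
  have hucommon : u ∈ univ.filter fun u => G.Adj v u ∧ G.Adj u w := by
    rw [hfil]
    simp only [mem_sdiff, mem_univ, true_and, mem_insert, mem_singleton]
    push_neg
    refine ⟨?_, ?_, ?_, ?_⟩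
    · rintro rfl; exact hu (SimpleGraph.Reachable.refl _)
    · rintro rfl; exact hu h.reachable
    · rintro rfl; exact hu ha.reachable
    · rintro rfl; exact hu (h.reachable.trans hb.reachable)
  have hpos : 0 < Fintype.card V - 4 := by
    rw [← hcardfil]
    exact Finset.card_pos.mpr ⟨u, hucommon⟩
  have hcommon : G.Adj v u ∧ G.Adj u w := by
    simpa using hucommon
  have hdist : G.dist v w = 2 := by
    have hle : G.dist v w ≤ 2 := by
      have := SimpleGraph.dist_le
        (SimpleGraph.Walk.cons hcommon.1 (SimpleGraph.Walk.cons hcommon.2 SimpleGraph.Walk.nil))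
      simpa using this
    have h0 : G.dist v w ≠ 0 := by
      rw [ne_eq, SimpleGraph.dist_eq_zero_iff_eq_or_not_reachable]
      push_neg
      exact ⟨hvw, ⟨SimpleGraph.Walk.cons hcommon.1
        (SimpleGraph.Walk.cons hcommon.2 SimpleGraph.Walk.nil)⟩⟩
    have h1 : G.dist v w ≠ 1 := by
      rw [ne_eq, SimpleGraph.dist_eq_one_iff_adj]
      exact ((SimpleGraph.compl_adj G v w).mp h).2
    omega
  refine ⟨hdist, ?_, by omega⟩
  rw [aux_sigma_dist2 hdist, ← hcardfil]
  rw [Nat.card_congr (Equiv.subtypeEquivRight (q := fun u => u ∈ univ.filter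
    fun u => G.Adj v u ∧ G.Adj u w) (by intro u; simp))]
  exact Nat.card_eq_finsetCard _

/-! ### Counting pairs -/

open Classical in
lemma aux_adjPairs_count [Fintype V] [DecidableEq V] {G : SimpleGraph V}
    (hdeg : ∀ x, ∃ a b, a ≠ b ∧ Gᶜ.Adj x a ∧ Gᶜ.Adj x b ∧ ∀ c, Gᶜ.Adj x c → c = a ∨ c = b) :
    ((univ ×ˢ univ).filter fun p : V × V => Gᶜ.Adj p.1 p.2).card = 2 * Fintype.card V := by
  rw [Finset.card_filter, Finset.sum_product]
  have hrow : ∀ v : V, (∑ w : V, if Gᶜ.Adj v w then 1 else 0) = 2 := by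
    intro v
    obtain ⟨a, b, hab, ha, hb, htot⟩ := hdeg v
    rw [Finset.sum_boole]
    have : (univ.filter fun w => Gᶜ.Adj v w) = {a, b} := by
      ext c
      simp only [mem_filter, mem_univ, true_and, mem_insert, mem_singleton]
      constructor
      · exact htot c
      · rintro (rfl | rfl)
        · exact ha
        · exact hb
    rw [this, Finset.card_pair hab]
    simp
  rw [Finset.sum_congr rfl (fun v _ => hrow v)]
  simp [Finset.sum_const, Finset.card_univ, mul_comm]

set_option maxHeartbeats 1000000 in
open Classical in
lemma aux_bad_count [Fintype V] [DecidableEq V] {G : SimpleGraph V}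
    (hdeg : ∀ x, ∃ a b, a ≠ b ∧ Gᶜ.Adj x a ∧ Gᶜ.Adj x b ∧ ∀ c, Gᶜ.Adj x c → c = a ∨ c = b)
    (htri : ∀ p q r : V, Gᶜ.Adj p q → Gᶜ.Adj q r → Gᶜ.Adj p r → False)
    (x : V) :
    (((univ ×ˢ univ).filter fun p : V × V => Gᶜ.Adj p.1 p.2).filter
      fun p : V × V => ¬(G.Adj p.1 x ∧ G.Adj x p.2)).card = 8 := by
  classical
  obtain ⟨a, b, hab, ha, hb, htot⟩ := hdeg x
  obtain ⟨a', ha', ha'x, ha'tot⟩ := aux_other_nbr hdeg ha.symm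
  obtain ⟨b', hb', hb'x, hb'tot⟩ := aux_other_nbr hdeg hb.symm
  have hax : a ≠ x := ha.ne'
  have hbx : b ≠ x := hb.ne'
  have ha'a : a' ≠ a := fun e => Gᶜ.irrefl (e ▸ ha')
  have hb'b : b' ≠ b := fun e => Gᶜ.irrefl (e ▸ hb')
  have ha'b : a' ≠ b := by
    rintro rfl
    exact htri x a a' ha ha' hb
  have hb'a : b' ≠ a := by
    rintro rfl
    exact htri x b b' hb hb' ha
  have hxa : x ≠ a := fun e => hax e.symm
  have hxb : x ≠ b := fun e => hbx e.symm
  have hxa' : x ≠ a' := fun e => ha'x e.symm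
  have hxb' : x ≠ b' := fun e => hb'x e.symm
  have haa' : a ≠ a' := fun e => ha'a e.symm
  have hbb' : b ≠ b' := fun e => hb'b e.symm
  have hba' : b ≠ a' := fun e => ha'b e.symm
  have hab' : a ≠ b' := fun e => hb'a e.symm
  have hset : (((univ ×ˢ univ).filter fun p : V × V => Gᶜ.Adj p.1 p.2).filter
      fun p : V × V => ¬(G.Adj p.1 x ∧ G.Adj x p.2)) =
      {(x,a),(x,b),(a,x),(b,x),(a,a'),(a',a),(b,b'),(b',b)} := by
    ext ⟨v, w⟩
    simp only [mem_filter, mem_product, mem_univ, true_and, and_true, mem_insert,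
      mem_singleton, Prod.mk.injEq]
    constructor
    · rintro ⟨hadj, hbad⟩
      rw [not_and_or] at hbad
      rw [aux_adj_compl_iff G v x, aux_adj_compl_iff G x w] at hbad
      push_neg at hbad
      rcases hbad with hbad | hbad
      · by_cases hxv : x = v
        · subst hxv
          rcases htot w hadj with rfl | rfl
          · exact Or.inl ⟨rfl, rfl⟩
          · exact Or.inr (Or.inl ⟨rfl, rfl⟩)
        · have hvx : Gᶜ.Adj v x := hbad hxv
          rcases htot v hvx.symm with rfl | rfl
          · rcases ha'tot w hadj with rfl | rfl
            · exact Or.inr (Or.inr (Or.inl ⟨rfl, rfl⟩))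
            · exact Or.inr (Or.inr (Or.inr (Or.inr (Or.inl ⟨rfl, rfl⟩))))
          · rcases hb'tot w hadj with rfl | rfl
            · exact Or.inr (Or.inr (Or.inr (Or.inl ⟨rfl, rfl⟩)))
            · exact Or.inr (Or.inr (Or.inr (Or.inr (Or.inr (Or.inr (Or.inl ⟨rfl, rfl⟩))))))
      · by_cases hxw : w = x
        · subst hxw
          rcases htot v hadj.symm with rfl | rfl
          · exact Or.inr (Or.inr (Or.inl ⟨rfl, rfl⟩))
          · exact Or.inr (Or.inr (Or.inr (Or.inl ⟨rfl, rfl⟩)))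
        · have hxw' : Gᶜ.Adj x w := hbad hxw
          rcases htot w hxw' with rfl | rfl
          · rcases ha'tot v hadj.symm with rfl | rfl
            · exact Or.inl ⟨rfl, rfl⟩
            · exact Or.inr (Or.inr (Or.inr (Or.inr (Or.inr (Or.inl ⟨rfl, rfl⟩)))))
          · rcases hb'tot v hadj.symm with rfl | rfl
            · exact Or.inr (Or.inl ⟨rfl, rfl⟩)
            · exact Or.inr (Or.inr (Or.inr (Or.inr (Or.inr (Or.inr (Or.inr ⟨rfl, rfl⟩))))))
    · have hGdisj : ∀ {p q : V}, Gᶜ.Adj p q → ¬G.Adj p q := by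
        intro p q hpq
        exact ((SimpleGraph.compl_adj G p q).mp hpq).2
      rintro (⟨rfl, rfl⟩ | ⟨rfl, rfl⟩ | ⟨rfl, rfl⟩ | ⟨rfl, rfl⟩ | ⟨rfl, rfl⟩ | ⟨rfl, rfl⟩ |
        ⟨rfl, rfl⟩ | ⟨rfl, rfl⟩)
      · exact ⟨ha, by simp⟩
      · exact ⟨hb, by simp⟩
      · exact ⟨ha.symm, fun hc => hGdisj ha.symm hc.1⟩
      · exact ⟨hb.symm, fun hc => hGdisj hb.symm hc.1⟩
      · exact ⟨ha', fun hc => hGdisj ha.symm hc.1⟩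
      · exact ⟨ha'.symm, fun hc => hGdisj ha hc.2⟩
      · exact ⟨hb', fun hc => hGdisj hb.symm hc.1⟩
      · exact ⟨hb'.symm, fun hc => hGdisj hb hc.2⟩
  rw [hset]
  rw [Finset.card_insert_of_notMem
      (by simp [Prod.ext_iff, hxa, hxb, hax, hbx, hab, ha'x, hb'x, ha'a, hb'b, ha'b, hb'a,
        hxa', hxb', haa', hbb', hba', hab']),
    Finset.card_insert_of_notMem
      (by simp [Prod.ext_iff, hxa, hxb, hax, hbx, hab, ha'x, hb'x, ha'a, hb'b, ha'b, hb'a,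
        hxa', hxb', haa', hbb', hba', hab']),
    Finset.card_insert_of_notMem
      (by simp [Prod.ext_iff, hxa, hxb, hax, hbx, hab, ha'x, hb'x, ha'a, hb'b, ha'b, hb'a,
        hxa', hxb', haa', hbb', hba', hab']),
    Finset.card_insert_of_notMem
      (by simp [Prod.ext_iff, hxa, hxb, hax, hbx, hab, ha'x, hb'x, ha'a, hb'b, ha'b, hb'a,
        hxa', hxb', haa', hbb', hba', hab']),
    Finset.card_insert_of_notMem
      (by simp [Prod.ext_iff, hxa, hxb, hax, hbx, hab, ha'x, hb'x, ha'a, hb'b, ha'b, hb'a,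
        hxa', hxb', haa', hbb', hba', hab']),
    Finset.card_insert_of_notMem
      (by simp [Prod.ext_iff, hxa, hxb, hax, hbx, hab, ha'x, hb'x, ha'a, hb'b, ha'b, hb'a,
        hxa', hxb', haa', hbb', hba', hab']),
    Finset.card_insert_of_notMem
      (by simp [Prod.ext_iff, hxa, hxb, hax, hbx, hab, ha'x, hb'x, ha'a, hb'b, ha'b, hb'a,
        hxa', hxb', haa', hbb', hba', hab']),
    Finset.card_singleton]

open Classical in
lemma aux_good_count [Fintype V] [DecidableEq V] {G : SimpleGraph V}
    (hdeg : ∀ x, ∃ a b, a ≠ b ∧ Gᶜ.Adj x a ∧ Gᶜ.Adj x b ∧ ∀ c, Gᶜ.Adj x c → c = a ∨ c = b)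
    (htri : ∀ p q r : V, Gᶜ.Adj p q → Gᶜ.Adj q r → Gᶜ.Adj p r → False)
    (x : V) :
    ((univ ×ˢ univ).filter fun p : V × V =>
        Gᶜ.Adj p.1 p.2 ∧ G.Adj p.1 x ∧ G.Adj x p.2).card = 2 * Fintype.card V - 8 := by
  classical
  have hsplit := Finset.card_filter_add_card_filter_not
    (s := (univ ×ˢ univ).filter fun p : V × V => Gᶜ.Adj p.1 p.2)
    (p := fun p : V × V => G.Adj p.1 x ∧ G.Adj x p.2)
  rw [Finset.filter_filter] at hsplit
  rw [aux_adjPairs_count hdeg, aux_bad_count hdeg htri x] at hsplit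
  omega

/-! ### The betweenness value -/

open Classical in
lemma aux_btw_eq_one [Fintype V] [DecidableEq V] {G : SimpleGraph V}
    (hdeg : ∀ x, ∃ a b, a ≠ b ∧ Gᶜ.Adj x a ∧ Gᶜ.Adj x b ∧ ∀ c, Gᶜ.Adj x c → c = a ∨ c = b)
    (htri : ∀ p q r : V, Gᶜ.Adj p q → Gᶜ.Adj q r → Gᶜ.Adj p r → False)
    (hfar : ∀ v : V, ∃ u, ¬Gᶜ.Reachable v u)
    (x : V) : btw G x = 1 := by
  classical
  have h4n : 4 < Fintype.card V := by
    obtain ⟨a, b, hab, ha, hb, htot⟩ := hdeg x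
    exact (aux_pair_facts hdeg htri hfar ha).2.2
  have key : ∀ v w : V,
      (if v ≠ w then (sigmaVia G v w x : ℝ) / (sigma G v w : ℝ) else 0) =
      if Gᶜ.Adj v w ∧ G.Adj v x ∧ G.Adj x w
        then ((Fintype.card V - 4 : ℕ) : ℝ)⁻¹ else 0 := by
    intro v w
    by_cases hvw : v = w
    · rw [if_neg (by simpa using hvw), if_neg (fun hc => Gᶜ.irrefl (hvw ▸ hc.1))]
    · rw [if_pos hvw]
      by_cases hadj : G.Adj v w
      · rw [aux_sigmaVia_adj hadj,
          if_neg (fun hc => ((SimpleGraph.compl_adj G v w).mp hc.1).2 hadj)]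
        simp
      · have hB : Gᶜ.Adj v w := (SimpleGraph.compl_adj G v w).mpr ⟨hvw, hadj⟩
        obtain ⟨hdist, hsig, -⟩ := aux_pair_facts hdeg htri hfar hB
        rw [aux_sigmaVia_dist2 hdist, hsig]
        by_cases hcom : G.Adj v x ∧ G.Adj x w
        · rw [if_pos hcom, if_pos ⟨hB, hcom⟩]
          push_cast
          rw [one_div]
        · rw [if_neg hcom, if_neg (fun hc => hcom hc.2)]
          simp
  rw [btw]
  calc (1/2 : ℝ) * ∑ v : V, ∑ w : V,
      (if v ≠ w then (sigmaVia G v w x : ℝ) / (sigma G v w : ℝ) else 0)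
      = (1/2 : ℝ) * ∑ v : V, ∑ w : V,
          (if Gᶜ.Adj v w ∧ G.Adj v x ∧ G.Adj x w
            then ((Fintype.card V - 4 : ℕ) : ℝ)⁻¹ else 0) := by
        congr 1
        exact Finset.sum_congr rfl fun v _ => Finset.sum_congr rfl fun w _ => key v w
    _ = (1/2 : ℝ) * ∑ p ∈ univ ×ˢ univ,
          (if Gᶜ.Adj p.1 p.2 ∧ G.Adj p.1 x ∧ G.Adj x p.2
            then ((Fintype.card V - 4 : ℕ) : ℝ)⁻¹ else 0) := by
        rw [Finset.sum_product]
    _ = (1/2 : ℝ) * ∑ p ∈ (univ ×ˢ univ).filter (fun p : V × V =>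
          Gᶜ.Adj p.1 p.2 ∧ G.Adj p.1 x ∧ G.Adj x p.2),
          ((Fintype.card V - 4 : ℕ) : ℝ)⁻¹ := by
        rw [Finset.sum_filter]
    _ = (1/2 : ℝ) * ((2 * Fintype.card V - 8 : ℕ) * ((Fintype.card V - 4 : ℕ) : ℝ)⁻¹) := by
        rw [Finset.sum_const, nsmul_eq_mul]
        rw [aux_good_count hdeg htri x]
    _ = 1 := by
        have e1 : ((2 * Fintype.card V - 8 : ℕ) : ℝ) =
            2 * ((Fintype.card V - 4 : ℕ) : ℝ) := by
          push_cast [Nat.cast_sub (by omega : 8 ≤ 2 * Fintype.card V),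
            Nat.cast_sub (by omega : 4 ≤ Fintype.card V)]
          ring
        have e2 : ((Fintype.card V - 4 : ℕ) : ℝ) ≠ 0 := by
          have : (0 : ℕ) < Fintype.card V - 4 := by omega
          positivity
        rw [e1, mul_assoc, mul_inv_cancel₀ e2]
        norm_num

end Aux

/-- If `Ḡ` is disconnected and every component of `Ḡ` is a cycle of length
at least 4, then `G` is betweenness-uniform with betweenness value 1. -/
theorem stmt9 {V : Type*} [Fintype V] [DecidableEq V] [Nonempty V] (G : SimpleGraph V)
    (hdisc : ¬Gᶜ.Connected)
    (hcyc : ∀ C : Set V, IsComponent Gᶜ C →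
      ∃ k : ℕ, 4 ≤ k ∧ Nonempty ((Gᶜ.induce C) ≃g cycleGraph k)) :
    IsBUG G ∧ ∀ x : V, btw G x = 1 := by
  classical
  have hdeg : ∀ x : V, ∃ a b, a ≠ b ∧ Gᶜ.Adj x a ∧ Gᶜ.Adj x b ∧
      ∀ c, Gᶜ.Adj x c → c = a ∨ c = b := fun x => aux_deg_two hcyc x
  have htri : ∀ p q r : V, Gᶜ.Adj p q → Gᶜ.Adj q r → Gᶜ.Adj p r → False :=
    fun p q r => aux_tri_free hcyc p q r
  have hfar : ∀ v : V, ∃ u, ¬Gᶜ.Reachable v u := by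
    rw [SimpleGraph.connected_iff] at hdisc
    push_neg at hdisc
    have hpre : ¬Gᶜ.Preconnected := fun h => not_isEmpty_of_nonempty V (hdisc h)
    rw [SimpleGraph.Preconnected] at hpre
    push_neg at hpre
    obtain ⟨u0, v0, h0⟩ := hpre
    intro v
    by_contra hcon
    push_neg at hcon
    exact h0 ((hcon u0).symm.trans (hcon v0))
  have hval : ∀ x : V, btw G x = 1 := fun x => aux_btw_eq_one hdeg htri hfar x
  exact ⟨fun x y => (hval x).trans (hval y).symm, hval⟩

end BUG
end

section
/- For any natural number t ≥ 2, let Ḡ be the disjoint union of 4t²−4t−1 copies of K_{1,4t²−1} and t+1 copies of the complete bipartite graph K_{2t,2t}. Then Ḡ is a coBUG (all vertices have co-betweenness 1/(4t²−4t)), and the complement of Ḡ is a betweenness-uniform graph with betweenness value (4t+1)/(4t) = 1 + 1/(4t). -/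
open SimpleGraph Finset BigOperators

namespace BUG

variable {V : Type*}

section GEN
lemma sigmaVia_of_adj (G : SimpleGraph V) {v w : V} (x : V) (h : G.Adj v w) :
    sigmaVia G v w x = 0 := by
  have hd : G.dist v w = 1 := dist_eq_one_iff_adj.2 h
  rw [sigmaVia, hd]
  have : IsEmpty {p : G.Walk v w // p.length = 1 ∧ x ∈ p.support ∧ x ≠ v ∧ x ≠ w} := by
    constructor
    rintro ⟨p, hp, hx, hxv, hxw⟩
    cases p with
    | nil => simp at hp
    | cons h' q =>
      cases q with
      | nil => simp at hx; tauto
      | cons h'' r => simp at hp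
  simp [Nat.card_of_isEmpty]

def commonNbrs (G : SimpleGraph V) (v w : V) : Set V := {u | G.Adj v u ∧ G.Adj u w}

lemma dist_eq_two (G : SimpleGraph V) {v w : V} (hvw : v ≠ w) (hna : ¬ G.Adj v w)
    {u : V} (hu : u ∈ commonNbrs G v w) : G.dist v w = 2 := by
  obtain ⟨h1, h2⟩ := hu
  have hle : G.dist v w ≤ 2 := by
    have := SimpleGraph.dist_le (Walk.cons h1 (Walk.cons h2 Walk.nil))
    simpa using this
  have hne0 : G.dist v w ≠ 0 := by
    have hr : G.Reachable v w := ⟨Walk.cons h1 (Walk.cons h2 Walk.nil)⟩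
    simp [SimpleGraph.dist_eq_zero_iff_eq_or_not_reachable, hvw, hr]
  have hne1 : G.dist v w ≠ 1 := fun h => hna (dist_eq_one_iff_adj.1 h)
  omega

lemma walk2_equiv (G : SimpleGraph V) {v w : V} :
    Nat.card {p : G.Walk v w // p.length = 2} = Nat.card (commonNbrs G v w) := by
  symm
  apply Nat.card_eq_of_bijective (fun u => ⟨Walk.cons u.2.1 (Walk.cons u.2.2 Walk.nil), rfl⟩)
  constructor
  · rintro ⟨u, hu⟩ ⟨u', hu'⟩ h
    have := congrArg (fun p => p.1.support) h
    simp [Walk.support_cons] at this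
    exact Subtype.ext this
  · rintro ⟨p, hp⟩
    cases p with
    | nil => simp at hp
    | cons h' q =>
      cases q with
      | nil => simp at hp
      | cons h'' r =>
        cases r with
        | nil => exact ⟨⟨_, h', h''⟩, rfl⟩
        | cons h3 r' => simp at hp

open Classical in
lemma walk2via_card (G : SimpleGraph V) {v w : V} (x : V) :
    Nat.card {p : G.Walk v w // p.length = 2 ∧ x ∈ p.support ∧ x ≠ v ∧ x ≠ w} =
      if x ∈ commonNbrs G v w then 1 else 0 := by
  split
  · rename_i hx
    obtain ⟨h1, h2⟩ := hx
    have hxv : x ≠ v := fun h => G.irrefl (h ▸ h1)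
    have hxw : x ≠ w := fun h => G.irrefl (h ▸ h2)
    have hcan : ∀ p : {p : G.Walk v w // p.length = 2 ∧ x ∈ p.support ∧ x ≠ v ∧ x ≠ w},
        p = ⟨Walk.cons h1 (Walk.cons h2 Walk.nil), rfl, by simp, hxv, hxw⟩ := by
      rintro ⟨p, hp, hxs, _, _⟩
      cases p with
      | nil => simp at hp
      | cons ha q =>
        cases q with
        | nil => simp at hp
        | cons hb r =>
          cases r with
          | nil =>
            simp [Walk.support_cons] at hxs
            rcases hxs with h | h | h
            · tauto
            · subst h; rfl
            · tauto
          | cons h3 r' => simp at hp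
    have : Subsingleton {p : G.Walk v w // p.length = 2 ∧ x ∈ p.support ∧ x ≠ v ∧ x ≠ w} :=
      ⟨fun a b => (hcan a).trans (hcan b).symm⟩
    have : Nonempty {p : G.Walk v w // p.length = 2 ∧ x ∈ p.support ∧ x ≠ v ∧ x ≠ w} :=
      ⟨⟨Walk.cons h1 (Walk.cons h2 Walk.nil), rfl, by simp, hxv, hxw⟩⟩
    exact Nat.card_unique
  · rename_i hx
    have : IsEmpty {p : G.Walk v w // p.length = 2 ∧ x ∈ p.support ∧ x ≠ v ∧ x ≠ w} := by
      constructor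
      rintro ⟨p, hp, hxs, hxv, hxw⟩
      cases p with
      | nil => simp at hp
      | cons ha q =>
        cases q with
        | nil => simp at hp
        | cons hb r =>
          cases r with
          | nil =>
            simp [Walk.support_cons] at hxs
            rcases hxs with h | h | h
            · tauto
            · subst h; exact hx ⟨ha, hb⟩
            · tauto
          | cons h3 r' => simp at hp
    simp [Nat.card_of_isEmpty]

lemma mem_closeSet_iff (H : SimpleGraph V) (a b z : V) :
    z ∈ closeSet H s(a,b) ↔ z = a ∨ z = b ∨ H.Adj z a ∨ H.Adj z b := by
  simp only [closeSet, Set.mem_setOf_eq, Sym2.mem_iff]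
  constructor
  · rintro ⟨u, (rfl | rfl), (rfl | h)⟩ <;> tauto
  · rintro (rfl | rfl | h | h)
    exacts [⟨z, Or.inl rfl, Or.inl rfl⟩, ⟨z, Or.inr rfl, Or.inl rfl⟩,
      ⟨a, Or.inl rfl, Or.inr h⟩, ⟨b, Or.inr rfl, Or.inr h⟩]

lemma commonNbrs_eq_compl (B : SimpleGraph V) (v w : V) :
    commonNbrs Bᶜ v w = (closeSet B s(v,w))ᶜ := by
  ext z
  simp only [commonNbrs, Set.mem_setOf_eq, Set.mem_compl_iff, mem_closeSet_iff, compl_adj]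
  constructor
  · rintro ⟨⟨h1, h2⟩, ⟨h3, h4⟩⟩
    push_neg
    exact ⟨fun h => h1 h.symm, h3, fun h => h2 h.symm, fun h => h4 h⟩
  · intro h
    push_neg at h
    obtain ⟨h1, h2, h3, h4⟩ := h
    exact ⟨⟨fun h => h1 h.symm, fun h => h3 h.symm⟩, ⟨h2, h4⟩⟩

open Classical in
lemma sum_pairs_eq [Fintype V] [DecidableEq V] (B : SimpleGraph V) (g : Sym2 V → ℝ) :
    ∑ v : V, ∑ w : V, (if B.Adj v w then g s(v,w) else 0) =
      2 * ∑ e : Sym2 V, (if e ∈ B.edgeSet then g e else 0) := by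
  classical
  have key : ∀ e : Sym2 V,
      ∑ p ∈ (univ ×ˢ univ : Finset (V × V)).filter (fun p => Sym2.mk p.1 p.2 = e),
        (if B.Adj p.1 p.2 then g (Sym2.mk p.1 p.2) else 0) =
      2 * (if e ∈ B.edgeSet then g e else 0) := by
    intro e
    induction e using Sym2.inductionOn with
    | hf a b =>
      by_cases hab : B.Adj a b
      · have hne : a ≠ b := hab.ne
        have hfib : (univ ×ˢ univ : Finset (V × V)).filter (fun p => Sym2.mk p.1 p.2 = s(a,b)) =
            {(a,b), (b,a)} := by
          ext ⟨x, y⟩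
          simp only [Finset.mem_filter, Finset.mem_univ, true_and, Finset.mem_insert,
            Finset.mem_singleton, Finset.mem_product, Prod.mk.injEq, and_true,
            show Sym2.mk x y = s(x,y) from rfl, Sym2.eq_iff]
        rw [hfib]
        rw [Finset.sum_insert (by simp [Prod.ext_iff]; intro h; exact fun _ => hne h)]
        rw [Finset.sum_singleton]
        have : Sym2.mk (b : V) a = s(a, b) := Sym2.eq_swap
        simp only [hab, if_true, hab.symm, this]
        rw [if_pos (B.mem_edgeSet.2 hab)]
        ring
      · rw [if_neg (fun h => hab (B.mem_edgeSet.1 h))]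
        rw [Finset.sum_eq_zero, mul_zero]
        rintro ⟨x, y⟩ hp
        simp only [Finset.mem_filter] at hp
        have := hp.2
        rw [show Sym2.mk x y = s(x,y) from rfl, Sym2.eq_iff] at this
        rcases this with ⟨rfl, rfl⟩ | ⟨rfl, rfl⟩
        · simp [hab]
        · simp only [ite_eq_right_iff]
          intro h
          exact absurd h.symm hab
  calc ∑ v : V, ∑ w : V, (if B.Adj v w then g s(v,w) else 0)
      = ∑ p ∈ (univ ×ˢ univ : Finset (V × V)), (if B.Adj p.1 p.2 then g (Sym2.mk p.1 p.2) else 0) := by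
        rw [Finset.sum_product]
    _ = ∑ e : Sym2 V, ∑ p ∈ (univ ×ˢ univ : Finset (V × V)).filter (fun p => Sym2.mk p.1 p.2 = e),
          (if B.Adj p.1 p.2 then g (Sym2.mk p.1 p.2) else 0) := (Finset.sum_fiberwise _ _ _).symm
    _ = ∑ e : Sym2 V, 2 * (if e ∈ B.edgeSet then g e else 0) :=
        Finset.sum_congr rfl fun e _ => key e
    _ = 2 * ∑ e : Sym2 V, (if e ∈ B.edgeSet then g e else 0) := by rw [Finset.mul_sum]

open Classical in
lemma pair_term [Fintype V] [DecidableEq V] (B : SimpleGraph V)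
    (hcn : ∀ v w, B.Adj v w → (commonNbrs Bᶜ v w).Nonempty) (x v w : V) (hvw : v ≠ w) :
    (sigmaVia Bᶜ v w x : ℝ) / (sigma Bᶜ v w : ℝ) =
      if B.Adj v w then (if x ∈ closeSet B s(v,w) then 0 else weight B s(v,w)) else 0 := by
  by_cases hadj : B.Adj v w
  · obtain ⟨u, hu⟩ := hcn v w hadj
    have hna : ¬ Bᶜ.Adj v w := by simp [compl_adj, hadj]
    have hd : Bᶜ.dist v w = 2 := dist_eq_two _ hvw hna hu
    have hσ : sigma Bᶜ v w = (commonNbrs Bᶜ v w).ncard := by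
      rw [sigma]; simp only [hd]; rw [walk2_equiv, Nat.card_coe_set_eq]
    have hσv : sigmaVia Bᶜ v w x = if x ∈ commonNbrs Bᶜ v w then 1 else 0 := by
      rw [sigmaVia]; simp only [hd]; rw [walk2via_card]
    have hcompl := commonNbrs_eq_compl B v w
    have hsum := Set.ncard_add_ncard_compl (closeSet B s(v,w))
    rw [Nat.card_eq_fintype_card] at hsum
    have hcard : (commonNbrs Bᶜ v w).ncard =
        Fintype.card V - (closeSet B s(v,w)).ncard := by rw [hcompl]; omega
    have hpos : 0 < (commonNbrs Bᶜ v w).ncard :=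
      (Set.ncard_pos (Set.toFinite _)).2 ⟨u, hu⟩
    have hlt : (closeSet B s(v,w)).ncard < Fintype.card V := by omega
    have hcast : ((commonNbrs Bᶜ v w).ncard : ℝ) =
        (Fintype.card V : ℝ) - ((closeSet B s(v,w)).ncard : ℝ) := by
      rw [hcard, Nat.cast_sub hlt.le]
    rw [hσ, hσv, if_pos hadj]
    by_cases hx : x ∈ closeSet B s(v,w)
    · have hxn : x ∉ commonNbrs Bᶜ v w := by rw [hcompl]; simpa using hx
      simp [hxn, hx]
    · have hxy : x ∈ commonNbrs Bᶜ v w := by rw [hcompl]; simpa using hx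
      rw [if_pos hxy, if_neg hx, weight, hcast]
      norm_num
  · have hca : Bᶜ.Adj v w := ⟨hvw, hadj⟩
    rw [sigmaVia_of_adj _ _ hca, if_neg hadj]
    simp

open Classical in
lemma btw_compl [Fintype V] [DecidableEq V] (B : SimpleGraph V)
    (hcn : ∀ v w, B.Adj v w → (commonNbrs Bᶜ v w).Nonempty) (x : V) :
    btw Bᶜ x = totalWeight B - coB B x := by
  have h1 : ∀ v w : V, (if v ≠ w then (sigmaVia Bᶜ v w x : ℝ) / (sigma Bᶜ v w : ℝ) else 0)
      = (if B.Adj v w then (if x ∈ closeSet B s(v,w) then 0 else weight B s(v,w)) else 0) := by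
    intro v w
    by_cases hvw : v = w
    · subst hvw; simp
    · rw [if_pos hvw, pair_term B hcn x v w hvw]
  rw [btw]
  have h2 : ∑ v : V, ∑ w : V,
      (if v ≠ w then (sigmaVia Bᶜ v w x : ℝ) / (sigma Bᶜ v w : ℝ) else 0)
      = ∑ v : V, ∑ w : V, (if B.Adj v w then
          (if x ∈ closeSet B s(v,w) then 0 else weight B s(v,w)) else 0) := by
    exact Finset.sum_congr rfl fun v _ => Finset.sum_congr rfl fun w _ => h1 v w
  rw [h2, sum_pairs_eq B (fun e => if x ∈ closeSet B e then 0 else weight B e)]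
  rw [totalWeight, coB, ← Finset.sum_sub_distrib]
  rw [show ∀ A : ℝ, (1/2 : ℝ) * (2 * A) = A from fun A => by ring]
  refine Finset.sum_congr rfl fun e _ => ?_
  by_cases he : e ∈ B.edgeSet
  · by_cases hx : x ∈ closeSet B e
    · have hce : e ∈ closeEdges B x := ⟨he, hx⟩
      rw [if_pos he, if_pos hx, if_pos he, if_pos hce, sub_self]
    · have hce : e ∉ closeEdges B x := fun h => hx h.2
      rw [if_pos he, if_neg hx, if_pos he, if_neg hce, sub_zero]
  · have hce : e ∉ closeEdges B x := fun h => he h.1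
    rw [if_neg he, if_neg he, if_neg hce, sub_zero]
end GEN

section SPEC
variable (t : ℕ)

abbrev Vt := (Fin (4*t^2-4*t-1) × Fin (4*t^2-1+1)) ⊕ (Fin (t+1) × (Fin (2*t) ⊕ Fin (2*t)))

def Bt : SimpleGraph (Vt t) :=
  sumGraph (copies (4*t^2-4*t-1) (starG (4*t^2-1)))
    (copies (t+1) (completeBipartiteGraph (Fin (2*t)) (Fin (2*t))))

lemma adj_ll {i j : Fin (4*t^2-4*t-1)} {u v : Fin (4*t^2-1+1)} :
    (Bt t).Adj (Sum.inl (i,u)) (Sum.inl (j,v)) ↔ i = j ∧ u ≠ v ∧ (u = 0 ∨ v = 0) := by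
  show Sum.LiftRel _ _ _ _ ↔ _
  rw [Sum.liftRel_inl_inl]
  show (i = j ∧ (starG (4*t^2-1)).Adj u v) ↔ _
  rw [starG, SimpleGraph.fromRel_adj]

lemma adj_rr {i j : Fin (t+1)} {u v : Fin (2*t) ⊕ Fin (2*t)} :
    (Bt t).Adj (Sum.inr (i,u)) (Sum.inr (j,v)) ↔
      i = j ∧ (u.isLeft ∧ v.isRight ∨ u.isRight ∧ v.isLeft) := by
  show Sum.LiftRel _ _ _ _ ↔ _
  rw [Sum.liftRel_inr_inr]
  rfl

lemma adj_lr {p q} : ¬ (Bt t).Adj (Sum.inl p) (Sum.inr q) := Sum.not_liftRel_inl_inr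

lemma adj_rl {p q} : ¬ (Bt t).Adj (Sum.inr q) (Sum.inl p) := Sum.not_liftRel_inr_inl

lemma ha_pos (ht : 2 ≤ t) : 0 < 4*t^2-4*t-1 := by
  have h : 4*t+1 < 4*t^2 := by nlinarith
  rw [Nat.sub_sub]
  exact Nat.sub_pos_of_lt h

lemma hcn_spec (ht : 2 ≤ t) :
    ∀ v w, (Bt t).Adj v w → (commonNbrs (Bt t)ᶜ v w).Nonempty := by
  have h2t : 0 < 2*t := by omega
  intro v w h
  match v, w with
  | Sum.inl p, Sum.inl q =>
    refine ⟨Sum.inr (⟨0, by omega⟩, Sum.inl ⟨0, h2t⟩), ?_, ?_⟩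
    · exact ⟨fun hh => by simp at hh, fun hh => adj_lr t hh⟩
    · exact ⟨fun hh => by simp at hh, fun hh => adj_rl t hh⟩
  | Sum.inl p, Sum.inr q => exact absurd h (adj_lr t)
  | Sum.inr p, Sum.inl q => exact absurd h (adj_rl t)
  | Sum.inr p, Sum.inr q =>
    refine ⟨Sum.inl (⟨0, ha_pos t ht⟩, 0), ?_, ?_⟩
    · exact ⟨fun hh => by simp at hh, fun hh => adj_rl t hh⟩
    · exact ⟨fun hh => by simp at hh, fun hh => adj_lr t hh⟩

lemma closeSet_star (i : Fin (4*t^2-4*t-1)) (v : Fin (4*t^2-1+1)) (hv : v ≠ 0) :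
    closeSet (Bt t) s(Sum.inl (i,(0 : Fin (4*t^2-1+1))), Sum.inl (i,v)) =
      Set.range (fun z : Fin (4*t^2-1+1) => (Sum.inl (i,z) : Vt t)) := by
  ext x
  rw [mem_closeSet_iff]
  constructor
  · rintro (rfl | rfl | h | h)
    · exact ⟨0, rfl⟩
    · exact ⟨v, rfl⟩
    · match x with
      | Sum.inl (j, z) =>
        rw [adj_ll] at h
        exact ⟨z, by rw [h.1]⟩
      | Sum.inr q => exact absurd h (adj_rl t)
    · match x with
      | Sum.inl (j, z) =>
        rw [adj_ll] at h
        exact ⟨z, by rw [h.1]⟩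
      | Sum.inr q => exact absurd h (adj_rl t)
  · rintro ⟨z, rfl⟩
    by_cases hz : z = 0
    · subst hz; exact Or.inl rfl
    · exact Or.inr (Or.inr (Or.inl ((adj_ll t).2 ⟨rfl, hz, Or.inr rfl⟩)))

lemma closeSet_bip (i : Fin (t+1)) (a b : Fin (2*t)) :
    closeSet (Bt t) s(Sum.inr (i, Sum.inl a), Sum.inr (i, Sum.inr b)) =
      Set.range (fun z : Fin (2*t) ⊕ Fin (2*t) => (Sum.inr (i,z) : Vt t)) := by
  ext x
  rw [mem_closeSet_iff]
  constructor
  · rintro (rfl | rfl | h | h)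
    · exact ⟨Sum.inl a, rfl⟩
    · exact ⟨Sum.inr b, rfl⟩
    · match x with
      | Sum.inr (j, z) =>
        rw [adj_rr] at h
        exact ⟨z, by rw [h.1]⟩
      | Sum.inl q => exact absurd h (adj_lr t)
    · match x with
      | Sum.inr (j, z) =>
        rw [adj_rr] at h
        exact ⟨z, by rw [h.1]⟩
      | Sum.inl q => exact absurd h (adj_lr t)
  · rintro ⟨z, rfl⟩
    match z with
    | Sum.inl c =>
      exact Or.inr (Or.inr (Or.inr ((adj_rr t).2 ⟨rfl, Or.inl ⟨rfl, rfl⟩⟩)))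
    | Sum.inr c =>
      exact Or.inr (Or.inr (Or.inl ((adj_rr t).2 ⟨rfl, Or.inr ⟨rfl, rfl⟩⟩)))

lemma ncard_range_inl (i : Fin (4*t^2-4*t-1)) :
    (Set.range (fun z : Fin (4*t^2-1+1) => (Sum.inl (i,z) : Vt t))).ncard = 4*t^2-1+1 := by
  rw [← Nat.card_coe_set_eq,
    Nat.card_range_of_injective (f := fun z : Fin (4*t^2-1+1) => (Sum.inl (i,z) : Vt t))
      (fun x y h => by simpa using h),
    Nat.card_eq_fintype_card, Fintype.card_fin]

lemma ncard_range_inr (i : Fin (t+1)) :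
    (Set.range (fun z : Fin (2*t) ⊕ Fin (2*t) => (Sum.inr (i,z) : Vt t))).ncard = 2*t+2*t := by
  rw [← Nat.card_coe_set_eq,
    Nat.card_range_of_injective (f := fun z : Fin (2*t) ⊕ Fin (2*t) => (Sum.inr (i,z) : Vt t))
      (fun x y h => by simpa using h),
    Nat.card_eq_fintype_card]
  simp

lemma mem_edgeSet_iff' (e : Sym2 (Vt t)) : e ∈ (Bt t).edgeSet ↔
    (∃ i v, v ≠ 0 ∧ e = s(Sum.inl (i,(0 : Fin (4*t^2-1+1))), Sum.inl (i,v))) ∨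
    (∃ i a b, e = s(Sum.inr (i, Sum.inl a), Sum.inr (i, Sum.inr b))) := by
  induction e using Sym2.inductionOn with
  | hf x y =>
    rw [mem_edgeSet]
    constructor
    · intro h
      match x, y with
      | Sum.inl (i,u), Sum.inl (j,v) =>
        rw [adj_ll] at h
        obtain ⟨rfl, hne, h0⟩ := h
        rcases h0 with rfl | rfl
        · exact Or.inl ⟨i, v, Ne.symm hne, rfl⟩
        · exact Or.inl ⟨i, u, hne, Sym2.eq_swap.symm⟩
      | Sum.inl _, Sum.inr _ => exact absurd h (adj_lr t)
      | Sum.inr _, Sum.inl _ => exact absurd h (adj_rl t)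
      | Sum.inr (i,u), Sum.inr (j,v) =>
        rw [adj_rr] at h
        obtain ⟨rfl, hc⟩ := h
        match u, v with
        | Sum.inl a, Sum.inr b => exact Or.inr ⟨i, a, b, rfl⟩
        | Sum.inr a, Sum.inl b => exact Or.inr ⟨i, b, a, Sym2.eq_swap.symm⟩
        | Sum.inl a, Sum.inl b => simp at hc
        | Sum.inr a, Sum.inr b => simp at hc
    · rintro (⟨i, v, hv, he⟩ | ⟨i, a, b, he⟩)
      · rw [Sym2.eq_iff] at he
        rcases he with ⟨rfl, rfl⟩ | ⟨rfl, rfl⟩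
        · exact (adj_ll t).2 ⟨rfl, Ne.symm hv, Or.inl rfl⟩
        · exact (adj_ll t).2 ⟨rfl, hv, Or.inr rfl⟩
      · rw [Sym2.eq_iff] at he
        rcases he with ⟨rfl, rfl⟩ | ⟨rfl, rfl⟩
        · exact (adj_rr t).2 ⟨rfl, Or.inl ⟨rfl, rfl⟩⟩
        · exact (adj_rr t).2 ⟨rfl, Or.inr ⟨rfl, rfl⟩⟩

lemma closeEdges_inl (i : Fin (4*t^2-4*t-1)) (u : Fin (4*t^2-1+1)) (e : Sym2 (Vt t)) :
    e ∈ closeEdges (Bt t) (Sum.inl (i,u)) ↔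
      ∃ v, v ≠ 0 ∧ e = s(Sum.inl (i,(0 : Fin (4*t^2-1+1))), Sum.inl (i,v)) := by
  constructor
  · rintro ⟨he, hx⟩
    rw [mem_edgeSet_iff'] at he
    rcases he with ⟨j, v, hv, rfl⟩ | ⟨j, a, b, rfl⟩
    · rw [closeSet_star _ _ _ hv] at hx
      obtain ⟨z, hz⟩ := hx
      simp only [Sum.inl.injEq, Prod.mk.injEq] at hz
      obtain ⟨rfl, -⟩ := hz
      exact ⟨v, hv, rfl⟩
    · rw [closeSet_bip] at hx
      obtain ⟨z, hz⟩ := hx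
      simp at hz
  · rintro ⟨v, hv, rfl⟩
    refine ⟨(mem_edgeSet_iff' t _).2 (Or.inl ⟨i, v, hv, rfl⟩), ?_⟩
    rw [closeSet_star _ _ _ hv]
    exact ⟨u, rfl⟩

lemma closeEdges_inr (i : Fin (t+1)) (u : Fin (2*t) ⊕ Fin (2*t)) (e : Sym2 (Vt t)) :
    e ∈ closeEdges (Bt t) (Sum.inr (i,u)) ↔
      ∃ a b, e = s(Sum.inr (i, Sum.inl a), Sum.inr (i, Sum.inr b)) := by
  constructor
  · rintro ⟨he, hx⟩
    rw [mem_edgeSet_iff'] at he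
    rcases he with ⟨j, v, hv, rfl⟩ | ⟨j, a, b, rfl⟩
    · rw [closeSet_star _ _ _ hv] at hx
      obtain ⟨z, hz⟩ := hx
      simp at hz
    · rw [closeSet_bip] at hx
      obtain ⟨z, hz⟩ := hx
      simp only [Sum.inr.injEq, Prod.mk.injEq] at hz
      obtain ⟨rfl, -⟩ := hz
      exact ⟨a, b, rfl⟩
  · rintro ⟨a, b, rfl⟩
    refine ⟨(mem_edgeSet_iff' t _).2 (Or.inr ⟨i, a, b, rfl⟩), ?_⟩
    rw [closeSet_bip]
    exact ⟨u, rfl⟩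

open Classical in
lemma coB_filter {W : Type*} [Fintype W] [DecidableEq W] (H : SimpleGraph W) (x : W) :
    coB H x = ∑ e ∈ Finset.univ.filter (fun e => e ∈ closeEdges H x), weight H e := by
  rw [coB, Finset.sum_filter]

open Classical in
lemma totalWeight_filter {W : Type*} [Fintype W] [DecidableEq W] (H : SimpleGraph W) :
    totalWeight H = ∑ e ∈ Finset.univ.filter (fun e => e ∈ H.edgeSet), weight H e := by
  rw [totalWeight, Finset.sum_filter]

open Classical in
lemma coB_inl (i : Fin (4*t^2-4*t-1)) (u : Fin (4*t^2-1+1)) :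
    coB (Bt t) (Sum.inl (i,u)) =
      ((4*t^2-1 : ℕ) : ℝ) * (1/((Fintype.card (Vt t) : ℝ) - ((4*t^2-1+1 : ℕ) : ℝ))) := by
  rw [coB_filter]
  have hfil : (Finset.univ.filter (fun e => e ∈ closeEdges (Bt t) (Sum.inl (i,u)))) =
      (Finset.univ.filter (fun v : Fin (4*t^2-1+1) => v ≠ 0)).image
        (fun v => s(Sum.inl (i,(0 : Fin (4*t^2-1+1))), (Sum.inl (i,v) : Vt t))) := by
    ext e
    simp only [Finset.mem_filter, Finset.mem_univ, true_and, Finset.mem_image,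
      closeEdges_inl]
    constructor
    · rintro ⟨v, hv, rfl⟩; exact ⟨v, hv, rfl⟩
    · rintro ⟨v, hv, rfl⟩; exact ⟨v, hv, rfl⟩
  rw [hfil, Finset.sum_image (fun x _ y _ h => by
    have := Sym2.congr_right.mp h
    simpa using this)]
  have hconst : ∀ v ∈ Finset.univ.filter (fun v : Fin (4*t^2-1+1) => v ≠ 0),
      weight (Bt t) s(Sum.inl (i,(0 : Fin (4*t^2-1+1))), (Sum.inl (i,v) : Vt t)) =
        1/((Fintype.card (Vt t) : ℝ) - ((4*t^2-1+1 : ℕ) : ℝ)) := by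
    intro v hv
    rw [Finset.mem_filter] at hv
    rw [weight, closeSet_star _ _ _ hv.2, ncard_range_inl]
  rw [Finset.sum_congr rfl hconst, Finset.sum_const, nsmul_eq_mul]
  congr 1
  have herase : (Finset.univ.filter (fun v : Fin (4*t^2-1+1) => v ≠ 0)) =
      Finset.univ.erase 0 := by
    ext v; simp [Finset.mem_erase, and_comm]
  rw [herase, Finset.card_erase_of_mem (Finset.mem_univ _), Finset.card_univ, Fintype.card_fin]
  norm_num

open Classical in
lemma coB_inr (i : Fin (t+1)) (u : Fin (2*t) ⊕ Fin (2*t)) :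
    coB (Bt t) (Sum.inr (i,u)) =
      (((2*t)*(2*t) : ℕ) : ℝ) * (1/((Fintype.card (Vt t) : ℝ) - ((2*t+2*t : ℕ) : ℝ))) := by
  rw [coB_filter]
  have hfil : (Finset.univ.filter (fun e => e ∈ closeEdges (Bt t) (Sum.inr (i,u)))) =
      (Finset.univ : Finset (Fin (2*t) × Fin (2*t))).image
        (fun p => s(Sum.inr (i, Sum.inl p.1), (Sum.inr (i, Sum.inr p.2) : Vt t))) := by
    ext e
    simp only [Finset.mem_filter, Finset.mem_univ, true_and, Finset.mem_image,
      closeEdges_inr]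
    constructor
    · rintro ⟨a, b, rfl⟩; exact ⟨(a,b), rfl⟩
    · rintro ⟨⟨a, b⟩, rfl⟩; exact ⟨a, b, rfl⟩
  rw [hfil, Finset.sum_image (fun x _ y _ h => by
    rw [Sym2.eq_iff] at h
    rcases h with ⟨h1, h2⟩ | ⟨h1, h2⟩
    · simp only [Sum.inr.injEq, Prod.mk.injEq, Sum.inl.injEq] at h1 h2
      exact Prod.ext h1.2 h2.2
    · simp at h1)]
  have hconst : ∀ p ∈ (Finset.univ : Finset (Fin (2*t) × Fin (2*t))),
      weight (Bt t) s(Sum.inr (i, Sum.inl p.1), (Sum.inr (i, Sum.inr p.2) : Vt t)) =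
        1/((Fintype.card (Vt t) : ℝ) - ((2*t+2*t : ℕ) : ℝ)) := by
    intro p _
    rw [weight, closeSet_bip, ncard_range_inr]
  rw [Finset.sum_congr rfl hconst, Finset.sum_const, nsmul_eq_mul]
  congr 1
  rw [Finset.card_univ]
  simp

open Classical in
lemma totalWeight_eq :
    totalWeight (Bt t) =
      (((4*t^2-4*t-1)*(4*t^2-1) : ℕ) : ℝ) *
        (1/((Fintype.card (Vt t) : ℝ) - ((4*t^2-1+1 : ℕ) : ℝ))) +
      (((t+1)*((2*t)*(2*t)) : ℕ) : ℝ) *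
        (1/((Fintype.card (Vt t) : ℝ) - ((2*t+2*t : ℕ) : ℝ))) := by
  rw [totalWeight_filter]
  set S1 : Finset (Fin (4*t^2-4*t-1) × Fin (4*t^2-1+1)) :=
    Finset.univ ×ˢ (Finset.univ.filter (fun v : Fin (4*t^2-1+1) => v ≠ 0)) with hS1
  set f1 : Fin (4*t^2-4*t-1) × Fin (4*t^2-1+1) → Sym2 (Vt t) :=
    fun p => s(Sum.inl (p.1,(0 : Fin (4*t^2-1+1))), Sum.inl (p.1,p.2)) with hf1
  set S2 : Finset (Fin (t+1) × Fin (2*t) × Fin (2*t)) := Finset.univ with hS2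
  set f2 : Fin (t+1) × Fin (2*t) × Fin (2*t) → Sym2 (Vt t) :=
    fun p => s(Sum.inr (p.1, Sum.inl p.2.1), Sum.inr (p.1, Sum.inr p.2.2)) with hf2
  have hfil : (Finset.univ.filter (fun e => e ∈ (Bt t).edgeSet)) =
      S1.image f1 ∪ S2.image f2 := by
    ext e
    simp only [Finset.mem_filter, Finset.mem_univ, true_and, Finset.mem_union,
      Finset.mem_image, mem_edgeSet_iff', hS1, hS2, hf1, hf2, Finset.mem_product,
      Finset.mem_filter]
    constructor
    · rintro (⟨i, v, hv, rfl⟩ | ⟨i, a, b, rfl⟩)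
      · exact Or.inl ⟨(i,v), hv, rfl⟩
      · exact Or.inr ⟨(i,a,b), rfl⟩
    · rintro (⟨⟨i,v⟩, hv, rfl⟩ | ⟨⟨i,a,b⟩, rfl⟩)
      · exact Or.inl ⟨i, v, hv, rfl⟩
      · exact Or.inr ⟨i, a, b, rfl⟩
  have hdisj : Disjoint (S1.image f1) (S2.image f2) := by
    rw [Finset.disjoint_left]
    rintro e he1 he2
    rw [Finset.mem_image] at he1 he2
    obtain ⟨p, -, rfl⟩ := he1
    obtain ⟨q, -, hq⟩ := he2
    rw [hf1, hf2, Sym2.eq_iff] at hq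
    rcases hq with ⟨h1, -⟩ | ⟨h1, -⟩ <;> simp at h1
  have hinj1 : ∀ x ∈ S1, ∀ y ∈ S1, f1 x = f1 y → x = y := by
    rintro ⟨i,v⟩ hx ⟨j,w⟩ hy h
    rw [hS1, Finset.mem_product, Finset.mem_filter] at hx hy
    rw [hf1, Sym2.eq_iff] at h
    rcases h with ⟨h1, h2⟩ | ⟨h1, h2⟩
    · simp only [Sum.inl.injEq, Prod.mk.injEq] at h1 h2
      exact Prod.ext h1.1 h2.2
    · exfalso
      simp only [Sum.inl.injEq, Prod.mk.injEq] at h1 h2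
      first
      | exact hx.2.2 h2.2
      | exact hx.2.2 h2.2.symm
      | exact hx.2.2 h2.2.2
      | exact hx.2.2 h2.2.2.symm
  have hinj2 : ∀ x ∈ S2, ∀ y ∈ S2, f2 x = f2 y → x = y := by
    rintro ⟨i,a,b⟩ - ⟨j,c,d⟩ - h
    rw [hf2, Sym2.eq_iff] at h
    rcases h with ⟨h1, h2⟩ | ⟨h1, h2⟩
    · simp only [Sum.inr.injEq, Prod.mk.injEq, Sum.inl.injEq, Sum.inr.injEq] at h1 h2
      first
      | exact Prod.ext h1.1 (Prod.ext h1.2 h2.2.2)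
      | exact Prod.ext h1.1 (Prod.ext h1.2 h2.2)
    · simp only [Sum.inr.injEq, Prod.mk.injEq] at h1
      exact absurd h1.2 (by simp)
  rw [hfil, Finset.sum_union hdisj, Finset.sum_image hinj1, Finset.sum_image hinj2]
  have hc1 : ∀ p ∈ S1, weight (Bt t) (f1 p) =
      1/((Fintype.card (Vt t) : ℝ) - ((4*t^2-1+1 : ℕ) : ℝ)) := by
    rintro ⟨i,v⟩ hp
    rw [hS1, Finset.mem_product, Finset.mem_filter] at hp
    rw [hf1, weight, closeSet_star _ _ _ hp.2.2, ncard_range_inl]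
  have hc2 : ∀ p ∈ S2, weight (Bt t) (f2 p) =
      1/((Fintype.card (Vt t) : ℝ) - ((2*t+2*t : ℕ) : ℝ)) := by
    rintro ⟨i,a,b⟩ -
    rw [hf2, weight, closeSet_bip, ncard_range_inr]
  rw [Finset.sum_congr rfl hc1, Finset.sum_congr rfl hc2, Finset.sum_const, Finset.sum_const,
    nsmul_eq_mul, nsmul_eq_mul]
  congr 2
  · rw [hS1, Finset.card_product, Finset.card_univ, Fintype.card_fin]
    have herase : (Finset.univ.filter (fun v : Fin (4*t^2-1+1) => v ≠ 0)) =
        Finset.univ.erase 0 := by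
      ext v; simp [Finset.mem_erase, and_comm]
    rw [herase, Finset.card_erase_of_mem (Finset.mem_univ _), Finset.card_univ,
      Fintype.card_fin]
    norm_num
  · rw [hS2, Finset.card_univ]
    simp [Fintype.card_prod]

set_option synthInstance.maxHeartbeats 1000000 in
lemma card_Vt : Fintype.card (Vt t) = (4*t^2-4*t-1)*(4*t^2-1+1) + (t+1)*(2*t+2*t) := by
  rw [Fintype.card_sum, Fintype.card_prod, Fintype.card_prod, Fintype.card_sum]
  simp [Fintype.card_fin]

end SPEC

/-- For `t ≥ 2`, the disjoint union `B` of `4t²−4t−1` copies of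
`K_{1,4t²−1}` and `t+1` copies of `K_{2t,2t}` is a coBUG (every vertex has co-betweenness
`1/(4t²−4t)`), and its complement is betweenness-uniform with betweenness value
`(4t+1)/(4t)`. -/
theorem stmt17 (t : ℕ) (ht : 2 ≤ t) :
    (∀ x, coB (sumGraph (copies (4*t^2 - 4*t - 1) (starG (4*t^2 - 1)))
        (copies (t+1) (completeBipartiteGraph (Fin (2*t)) (Fin (2*t))))) x =
      1 / (4*(t : ℝ)^2 - 4*(t : ℝ))) ∧
    IsBUG (sumGraph (copies (4*t^2 - 4*t - 1) (starG (4*t^2 - 1)))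
        (copies (t+1) (completeBipartiteGraph (Fin (2*t)) (Fin (2*t)))))ᶜ ∧
    ∀ x, btw (sumGraph (copies (4*t^2 - 4*t - 1) (starG (4*t^2 - 1)))
        (copies (t+1) (completeBipartiteGraph (Fin (2*t)) (Fin (2*t)))))ᶜ x =
      (4*(t : ℝ) + 1) / (4*(t : ℝ)) := by
  have hT2 : (2:ℝ) ≤ (t:ℝ) := by exact_mod_cast ht
  have hc1 : ((4*t^2-4*t-1 : ℕ) : ℝ) = 4*(t:ℝ)^2-4*(t:ℝ)-1 := by
    have h1 : 4*t+1 ≤ 4*t^2 := by nlinarith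
    rw [Nat.sub_sub, Nat.cast_sub h1]
    push_cast; ring
  have hc2 : ((4*t^2-1+1 : ℕ) : ℝ) = 4*(t:ℝ)^2 := by
    have h1 : 1 ≤ 4*t^2 := by nlinarith
    rw [Nat.sub_add_cancel h1]; push_cast; ring
  have hc3 : ((4*t^2-1 : ℕ) : ℝ) = 4*(t:ℝ)^2-1 := by
    have h1 : 1 ≤ 4*t^2 := by nlinarith
    rw [Nat.cast_sub h1]; push_cast; ring
  have hcard : ((Fintype.card (Vt t) : ℕ) : ℝ) =
      (4*(t:ℝ)^2-4*(t:ℝ)-1)*(4*(t:ℝ)^2) + ((t:ℝ)+1)*(4*(t:ℝ)) := by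
    rw [card_Vt, Nat.cast_add, Nat.cast_mul, Nat.cast_mul, hc1, hc2]; push_cast; ring
  have hd1 : (Fintype.card (Vt t) : ℝ) - ((4*t^2-1+1 : ℕ) : ℝ) =
      4*(t:ℝ)*((t:ℝ)-1)*(4*(t:ℝ)^2-1) := by rw [hcard, hc2]; ring
  have hd2 : (Fintype.card (Vt t) : ℝ) - ((2*t+2*t : ℕ) : ℝ) =
      16*(t:ℝ)^3*((t:ℝ)-1) := by rw [hcard]; push_cast; ring
  have hp0 : (0:ℝ) < (t:ℝ) := by linarith
  have hp1 : (0:ℝ) < (t:ℝ) - 1 := by linarith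
  have hp2 : (0:ℝ) < 4*(t:ℝ)^2-1 := by nlinarith
  have hne1 : 4*(t:ℝ)*((t:ℝ)-1)*(4*(t:ℝ)^2-1) ≠ 0 :=
    ne_of_gt (mul_pos (mul_pos (by linarith) hp1) hp2)
  have hne2 : 16*(t:ℝ)^3*((t:ℝ)-1) ≠ 0 :=
    ne_of_gt (mul_pos (by positivity) hp1)
  have hne3 : 4*(t:ℝ)^2 - 4*(t:ℝ) ≠ 0 := by nlinarith
  have hne4 : 4*(t:ℝ) ≠ 0 := by positivity
  have hco : ∀ x : Vt t, coB (Bt t) x = 1 / (4*(t:ℝ)^2 - 4*(t:ℝ)) := by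
    intro x
    rcases x with ⟨i, u⟩ | ⟨i, u⟩
    · rw [coB_inl, hc3]
      rw [show (Fintype.card (Vt t) : ℝ) - ((4*t^2-1+1 : ℕ) : ℝ) =
        4*(t:ℝ)*((t:ℝ)-1)*(4*(t:ℝ)^2-1) from hd1]
      field_simp
    · rw [coB_inr]
      rw [show (Fintype.card (Vt t) : ℝ) - ((2*t+2*t : ℕ) : ℝ) =
        16*(t:ℝ)^3*((t:ℝ)-1) from hd2]
      push_cast
      field_simp
      ring
  have hbtw : ∀ x : Vt t, btw (Bt t)ᶜ x = (4*(t:ℝ) + 1) / (4*(t:ℝ)) := by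
    intro x
    rw [btw_compl (Bt t) (hcn_spec t ht) x, hco x, totalWeight_eq, hd1, hd2,
      Nat.cast_mul, Nat.cast_mul, hc1, hc3]
    push_cast
    field_simp
    ring
  exact ⟨fun x => hco x, fun x y => (hbtw x).trans (hbtw y).symm, fun x => hbtw x⟩

end BUG
end
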